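/- arXiv:1607.02746 — 6 statements merged into one kernel-verified Lean document; each statement's English description precedes it below -/
import Mathlib

section
/- If θ₁,...,θ_r are real numbers such that 1, θ₁,...,θ_r are linearly independent over ℚ, then the set {({mθ₁},...,{mθ_r}) : m ∈ ℕ} of vectors of fractional parts is dense in [0,1]^r. (Kronecker's approximation theorem.) -/
/-!
Weyl's equidistribution argument on the torus `𝕋ʳ = ℝʳ/ℤʳ`. Let `t ∈ 𝕋ʳ` be the image of `θ`;
rational independence of `1, θ₁, …, θᵣ` says exactly that no nontrivial character `χₙ` of the torus
takes the value `1` at `t`. For such a character, `(χₙ(t) - 1)` times the Birkhoff average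
`(1/N) ∑_{k<N} χₙ(x + k t)` telescopes to `(χₙ(x + N t) - χₙ(x))/N → 0`, which is also the integral
of `χₙ`. The characters span a dense subspace of `C(𝕋ʳ, ℂ)` (Stone–Weierstrass) and the averages
are uniformly `1`-Lipschitz, so the averages of every continuous function tend to its integral.
A continuous bump supported in a nonempty open set has positive integral, so the orbit `(k t)ₖ`
meets every such set. Finally, open subsets of `[0,1)ʳ` map to open subsets of the torus on which
the coordinates of `k t` are read off as the fractional parts `{k θᵢ}`.
-/

open MeasureTheory Filter Topology Set UnitAddTorus

instance : IsProbabilityMeasure (volume : Measure UnitAddCircle) :=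
  ⟨by simp [AddCircle.measure_univ]⟩

theorem birkhoffAverage_smul {R α M : Type*} [Semifield R] [AddCommMonoid M] [Module R M]
    (f : α → α) (c : R) (g : α → M) :
    birkhoffAverage R f (c • g) = c • birkhoffAverage R f g := by
  funext n x
  simp only [birkhoffAverage, birkhoffSum, Pi.smul_apply, ← Finset.smul_sum, smul_comm c]

theorem dist_birkhoffAverage_le_of_forall_dist_le {α E : Type*} [NormedAddCommGroup E]
    (𝕜 : Type*) [RCLike 𝕜] [NormedSpace 𝕜 E] (f : α → α) {g g' : α → E} {C : ℝ}
    (h : ∀ y, dist (g y) (g' y) ≤ C) (n : ℕ) (x : α) :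
    dist (birkhoffAverage 𝕜 f g n x) (birkhoffAverage 𝕜 f g' n x) ≤ C := by
  rcases eq_or_ne n 0 with rfl | hn
  · simpa using dist_nonneg.trans (h x)
  calc dist (birkhoffAverage 𝕜 f g n x) (birkhoffAverage 𝕜 f g' n x)
      = dist (birkhoffSum f g n x) (birkhoffSum f g' n x) / n := by
        simp [birkhoffAverage, dist_smul₀, div_eq_inv_mul]
    _ ≤ (∑ _k ∈ Finset.range n, C) / n := by
        gcongr
        exact dist_sum_sum_le_of_le _ fun k _ => h _
    _ = C := by simp [hn]

theorem denseRange_iterate_of_tendsto_birkhoffAverage {X : Type*} [TopologicalSpace X]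
    [CompactSpace X] [T2Space X] [MeasurableSpace X] [OpensMeasurableSpace X]
    {μ : Measure X} [IsFiniteMeasure μ] [μ.IsOpenPosMeasure] (𝕜 : Type*) [RCLike 𝕜]
    {f : X → X} {x : X}
    (h : ∀ g : C(X, 𝕜), Tendsto (birkhoffAverage 𝕜 f g · x) atTop (𝓝 (∫ y, g y ∂μ))) :
    DenseRange (f^[·] x) := by
  refine dense_iff_inter_open.mpr fun U hU ⟨y, hyU⟩ => ?_
  by_contra hmiss
  obtain ⟨u, hu0, hu1, hu⟩ := exists_continuous_zero_one_of_isClosed hU.isClosed_compl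
    isClosed_singleton (disjoint_singleton_right.mpr (not_not_intro hyU))
  have hpos : 0 < ∫ z, u z ∂μ :=
    u.continuous.integral_pos_of_hasCompactSupport_nonneg_nonzero (.of_compactSpace _)
      (fun z => (hu z).1) (x := y) (by simp [hu1 (mem_singleton y)])
  have horbit (k : ℕ) : u (f^[k] x) = 0 := hu0 fun hk => hmiss ⟨_, hk, k, rfl⟩
  have hzero : Tendsto (birkhoffAverage 𝕜 f (fun z => (u z : 𝕜)) · x) atTop (𝓝 0) := by
    simp [birkhoffAverage, birkhoffSum, horbit]
  have hintegral := tendsto_nhds_unique (h ⟨fun z => (u z : 𝕜), by fun_prop⟩) hzero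
  rw [ContinuousMap.coe_mk, integral_ofReal, RCLike.ofReal_eq_zero] at hintegral
  exact hpos.ne' hintegral

theorem AddCircle.toCircle_sum {ι : Type*} {T : ℝ} (s : Finset ι) (a : ι → AddCircle T) :
    toCircle (∑ i ∈ s, a i) = ∏ i ∈ s, toCircle (a i) := by
  induction s using Finset.cons_induction with
  | empty => simp
  | cons i s hi ih => rw [Finset.sum_cons, Finset.prod_cons, toCircle_add, ih]

theorem Int.fract_mem_of_coe_mem_image {s : Set ℝ} (hs : s ⊆ Ico 0 1) {a : ℝ}
    (ha : (a : UnitAddCircle) ∈ ((↑) : ℝ → UnitAddCircle) '' s) : Int.fract a ∈ s := by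
  obtain ⟨b, hb, hba⟩ := ha
  obtain ⟨k, hk⟩ := (AddCircle.coe_eq_zero_iff (1 : ℝ)).mp (sub_eq_zero.mpr hba.symm)
  have hfract : Int.fract a = b := by
    rw [← Int.fract_eq_self.mpr (hs hb), Int.fract_eq_fract]
    exact ⟨k, by simpa using hk.symm⟩
  exact hfract ▸ hb

namespace UnitAddTorus

variable {d : Type*} [Fintype d]

theorem mFourier_apply_add (n : d → ℤ) (x y : UnitAddTorus d) :
    mFourier n (x + y) = mFourier n x * mFourier n y := by
  simp only [mFourier, ContinuousMap.coe_mk, Pi.add_apply, fourier_apply, smul_add,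
    AddCircle.toCircle_add, Circle.coe_mul, Finset.prod_mul_distrib]

theorem mFourier_eq_one_iff {n : d → ℤ} {x : UnitAddTorus d} :
    mFourier n x = 1 ↔ ∑ i, n i • x i = 0 := by
  have hsum : mFourier n x = AddCircle.toCircle (∑ i, n i • x i) := by
    rw [AddCircle.toCircle_sum]
    exact (map_prod Circle.coeHom _ _).symm
  rw [hsum, Circle.coe_eq_one, ← AddCircle.toCircle_zero,
    (AddCircle.injective_toCircle one_ne_zero).eq_iff]

theorem mFourier_ne_one_of_rat_independent {θ : d → ℝ}
    (hind : ∀ (c : ℚ) (cf : d → ℚ), (c : ℝ) + ∑ i, (cf i : ℝ) * θ i = 0 → c = 0 ∧ ∀ i, cf i = 0)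
    {n : d → ℤ} (hn : n ≠ 0) : mFourier n (fun i => (θ i : UnitAddCircle)) ≠ 1 := by
  rw [Ne, mFourier_eq_one_iff]
  intro h
  have hcoe : ∑ i, n i • (θ i : UnitAddCircle) = ((∑ i, n i * θ i : ℝ) : UnitAddCircle) := by
    rw [← QuotientAddGroup.mk'_apply, map_sum]
    simp
  obtain ⟨k, hk⟩ := (AddCircle.coe_eq_zero_iff (1 : ℝ)).mp (hcoe ▸ h)
  rw [zsmul_eq_mul, mul_one] at hk
  refine hn (funext fun i => ?_)
  exact_mod_cast (hind (-k) (fun i => n i) (by push_cast; linarith)).2 i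

theorem integral_mFourier_eq_zero {n : d → ℤ} {t : UnitAddTorus d} (ht : mFourier n t ≠ 1) :
    ∫ x, mFourier n x = 0 := by
  have h := integral_add_left_eq_self (μ := volume) (mFourier n) t
  simp only [mFourier_apply_add, integral_const_mul] at h
  have : (mFourier n t - 1) * ∫ x, mFourier n x = 0 := by rw [sub_mul, h, one_mul, sub_self]
  exact (mul_eq_zero.mp this).resolve_left (sub_ne_zero.mpr ht)

theorem birkhoffAverage_mFourier_add_left (n : d → ℤ) (t x : UnitAddTorus d) (N : ℕ) :
    birkhoffAverage ℂ (t + ·) (mFourier n) N (t + x) =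
      mFourier n t * birkhoffAverage ℂ (t + ·) (mFourier n) N x := by
  simp only [birkhoffAverage, birkhoffSum, add_left_iterate, add_left_comm _ t,
    mFourier_apply_add n t, ← Finset.mul_sum, smul_eq_mul, mul_left_comm]

variable {t : UnitAddTorus d}

theorem tendsto_birkhoffAverage_mFourier (ht : ∀ n ≠ 0, mFourier n t ≠ 1) (n : d → ℤ)
    (x : UnitAddTorus d) :
    Tendsto (birkhoffAverage ℂ (t + ·) (mFourier n) · x) atTop (𝓝 (∫ y, mFourier n y)) := by
  rcases eq_or_ne n 0 with rfl | hn
  · simp only [mFourier_zero, ContinuousMap.coe_one, Pi.one_apply, integral_const,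
      probReal_univ, one_smul]
    refine tendsto_const_nhds.congr' ((eventually_ne_atTop 0).mono fun N hN => ?_)
    have hconst : (1 : UnitAddTorus d → ℂ) ∘ (t + ·) = 1 := rfl
    simp only [birkhoffAverage_of_comp_eq ℂ hconst (Nat.cast_ne_zero.mpr hN), Pi.one_apply]
  rw [integral_mFourier_eq_zero (ht n hn)]
  have hbdd : Bornology.IsBounded (range (mFourier n)) :=
    (isCompact_range (mFourier n).continuous).isBounded
  have h := tendsto_birkhoffAverage_apply_sub_birkhoffAverage' ℂ hbdd (t + ·) x
  simp only [birkhoffAverage_mFourier_add_left, ← sub_one_mul] at h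
  simpa [sub_ne_zero.mpr (ht n hn)] using h.const_mul (mFourier n t - 1)⁻¹

theorem tendsto_birkhoffAverage_integral (ht : ∀ n ≠ 0, mFourier n t ≠ 1)
    (f : C(UnitAddTorus d, ℂ)) (x : UnitAddTorus d) :
    Tendsto (birkhoffAverage ℂ (t + ·) f · x) atTop (𝓝 (∫ y, f y)) := by
  set S : Set C(UnitAddTorus d, ℂ) :=
    {f | Tendsto (birkhoffAverage ℂ (t + ·) f · x) atTop (𝓝 (∫ y, f y))}
  have hintegrable (f : C(UnitAddTorus d, ℂ)) : Integrable f :=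
    f.continuous.integrable_of_hasCompactSupport (.of_compactSpace _)
  have hclosed : IsClosed S := by
    have havg (N : ℕ) : LipschitzWith 1
        fun f : C(UnitAddTorus d, ℂ) => birkhoffAverage ℂ (t + ·) f N x :=
      LipschitzWith.of_dist_le_mul fun f g => by
        simpa using dist_birkhoffAverage_le_of_forall_dist_le ℂ (t + ·)
          (fun y => ContinuousMap.dist_apply_le_dist y) N x
    have hintegral : LipschitzWith 1 fun f : C(UnitAddTorus d, ℂ) => ∫ y, f y :=
      LipschitzWith.of_dist_le_mul fun f g => by
        rw [dist_eq_norm, ← integral_sub (hintegrable f) (hintegrable g), NNReal.coe_one, one_mul]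
        simpa using norm_integral_le_of_norm_le_const (μ := volume)
          (Eventually.of_forall fun y => (dist_eq_norm (f y) (g y)).symm.trans_le
            (ContinuousMap.dist_apply_le_dist y))
    exact (LipschitzWith.uniformEquicontinuous _ 1 havg).equicontinuous.isClosed_setOfPred_tendsto
      hintegral.continuous
  have hspan : (Submodule.span ℂ (range (mFourier (d := d))) : Set _) ⊆ S := fun f hf => by
    induction hf using Submodule.span_induction with
    | mem f hf => obtain ⟨n, rfl⟩ := hf; exact tendsto_birkhoffAverage_mFourier ht n x
    | zero => simp [S, birkhoffAverage, birkhoffSum]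
    | add f g _ _ hf hg =>
      simpa [S, birkhoffAverage_add, integral_add (hintegrable f) (hintegrable g)] using hf.add hg
    | smul c f _ hf => simpa [S, birkhoffAverage_smul, integral_const_mul] using hf.const_mul c
  have hdense := span_mFourier_closure_eq_top (d := d)
  rw [← SetLike.coe_set_eq, Submodule.topologicalClosure_coe] at hdense
  exact closure_minimal hspan hclosed (hdense ▸ trivial : f ∈ _)

theorem denseRange_nsmul (ht : ∀ n ≠ 0, mFourier n t ≠ 1) : DenseRange fun m : ℕ => m • t := by
  have h := denseRange_iterate_of_tendsto_birkhoffAverage (μ := volume) ℂ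
    fun f => tendsto_birkhoffAverage_integral ht f 0
  simpa only [add_left_iterate, add_zero] using h

end UnitAddTorus

theorem exists_nat_abs_fract_sub_lt_of_denseRange {d : Type*} [Fintype d] {θ : d → ℝ}
    (hθ : DenseRange fun m : ℕ => m • fun i => (θ i : UnitAddCircle)) {x : d → ℝ}
    (hx : ∀ i, x i ∈ Icc 0 1) {ε : ℝ} (hε : 0 < ε) :
    ∃ m : ℕ, ∀ i, |Int.fract (m * θ i) - x i| < ε := by
  set s : d → Set ℝ := fun i => Ioo 0 1 ∩ Metric.ball (x i) ε
  have hs (i : d) : (s i).Nonempty := by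
    have hxi : x i ∈ closure (Ioo (0 : ℝ) 1) := by rw [closure_Ioo zero_ne_one]; exact hx i
    obtain ⟨b, hb, hbx⟩ := Metric.mem_closure_iff.mp hxi ε hε
    exact ⟨b, hb, Metric.mem_ball'.mpr hbx⟩
  have hopen : IsOpen (univ.pi fun i => ((↑) : ℝ → UnitAddCircle) '' s i) :=
    isOpen_set_pi finite_univ fun i _ =>
      QuotientAddGroup.isOpenMap_coe _ (isOpen_Ioo.inter Metric.isOpen_ball)
  obtain ⟨m, hm⟩ := hθ.exists_mem_open hopen
    ⟨fun i => (hs i).some, fun i _ => mem_image_of_mem _ (hs i).some_mem⟩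
  refine ⟨m, fun i => ?_⟩
  have hmi : ((m * θ i : ℝ) : UnitAddCircle) ∈ ((↑) : ℝ → UnitAddCircle) '' s i := by
    rw [← nsmul_eq_mul, AddCircle.coe_nsmul]
    exact hm i (mem_univ i)
  have hfract := Int.fract_mem_of_coe_mem_image (inter_subset_left.trans Ioo_subset_Ico_self) hmi
  simpa [Real.dist_eq] using hfract.2

theorem kronecker_approximation {r : ℕ} (θ : Fin r → ℝ)
    (hind : ∀ (c : ℚ) (cf : Fin r → ℚ),
      (c : ℝ) + ∑ i, (cf i : ℝ) * θ i = 0 → c = 0 ∧ ∀ i, cf i = 0) :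
    ∀ x : Fin r → ℝ, (∀ i, x i ∈ Set.Icc (0 : ℝ) 1) → ∀ ε > (0 : ℝ),
      ∃ m : ℕ, ∀ i, |Int.fract ((m : ℝ) * θ i) - x i| < ε := by
  intro x hx ε hε
  exact exists_nat_abs_fract_sub_lt_of_denseRange
    (denseRange_nsmul fun _ hn => mFourier_ne_one_of_rat_independent hind hn) hx hε
end

section
/- Let n ≥ 2 be odd, n = 2k+1, and let β_q be the coefficient of t^q in the power series (1-t^{2k+2})/((1-t²)(1-t^{2k})). Then the limit as q → ∞ of (1/q) ∑_{j=0}^{q} (-1)^j β_j exists and equals (n+1)/(2(n-1)). -/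
/-!
Since `1 - t^(2k+2) = (1 - t^2) + t^2 (1 - t^(2k))`, the series equals
`1/(1 - t^2) + 1/(1 - t^(2k)) - 1`. Its coefficients vanish in odd degrees, so the alternating
partial sum up to `q` counts the multiples of `2` and of `2k` in `[0, q]`, minus one:
it is `⌊q/2⌋ + ⌊q/(2k)⌋ + 1`. Dividing by `q` gives the limit `1/2 + 1/(2k) = (n+1)/(2(n-1))`.
-/

open PowerSeries Filter Finset

namespace PowerSeries

def multiplesSeries (R : Type*) [Semiring R] (d : ℕ) : R⟦X⟧ :=
  mk fun j => if d ∣ j then 1 else 0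

variable {R : Type*}

section Semiring

variable [Semiring R]

@[simp]
theorem coeff_multiplesSeries (d j : ℕ) :
    coeff j (multiplesSeries R d) = if d ∣ j then 1 else 0 :=
  coeff_mk _ _

theorem sum_range_succ_coeff_multiplesSeries (d q : ℕ) :
    ∑ j ∈ range (q + 1), coeff j (multiplesSeries R d) = ((q / d + 1 : ℕ) : R) := by
  induction q with
  | zero => rw [zero_add, sum_range_one]; simp
  | succ q ih =>
    rw [sum_range_succ, ih, Nat.succ_div, coeff_multiplesSeries]
    split_ifs <;> simp

end Semiring

section Ring

variable [Ring R]

theorem multiplesSeries_mul_one_sub_X_pow {d : ℕ} (hd : 0 < d) :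
    multiplesSeries R d * (1 - X ^ d) = 1 := by
  ext j
  rw [mul_sub, mul_one, map_sub, coeff_mul_X_pow', coeff_multiplesSeries, coeff_one]
  rcases lt_or_ge j d with hj | hj
  · have : d ∣ j ↔ j = 0 := ⟨fun h => Nat.eq_zero_of_dvd_of_lt h hj, fun h => h ▸ dvd_zero d⟩
    simp [hj, this]
  · have : d ∣ j - d ↔ d ∣ j := Nat.dvd_sub_iff_left hj dvd_rfl
    simp [hj, this, show j ≠ 0 by omega]

end Ring

section CommRing

variable [CommRing R]

theorem eq_multiplesSeries_add_multiplesSeries_sub_one {d e : ℕ} (hd : 0 < d) (he : 0 < e)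
    {P : R⟦X⟧} (hP : P * ((1 - X ^ d) * (1 - X ^ e)) = 1 - X ^ (d + e)) :
    P = multiplesSeries R d + multiplesSeries R e - 1 := by
  have hD := multiplesSeries_mul_one_sub_X_pow (R := R) hd
  have hE := multiplesSeries_mul_one_sub_X_pow (R := R) he
  linear_combination (multiplesSeries R d * multiplesSeries R e) * hP
    + (multiplesSeries R e - (P + 1) * multiplesSeries R e * (1 - X ^ e)) * hD
    + (multiplesSeries R d - P - 1) * hE

theorem rescale_neg_one_multiplesSeries {d : ℕ} (hd : Even d) :
    rescale (-1) (multiplesSeries R d) = multiplesSeries R d := by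
  ext j
  rw [coeff_rescale, coeff_multiplesSeries]
  split_ifs with h
  · rw [mul_one, (even_iff_two_dvd.2 (hd.two_dvd.trans h)).neg_one_pow]
  · rw [mul_zero]

end CommRing

end PowerSeries

theorem tendsto_natCast_div_div_atTop (d : ℕ) :
    Tendsto (fun q : ℕ => ((q / d : ℕ) : ℝ) / q) atTop (nhds (1 / d)) := by
  refine ((tendsto_nat_floor_mul_div_atTop (a := (1 / d : ℝ)) (by positivity)).comp
    tendsto_natCast_atTop_atTop).congr fun q => ?_
  rw [Function.comp_apply, one_div_mul_eq_div, Nat.floor_div_eq_div]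

theorem average_betti_odd (n k : ℕ) (hk : 1 ≤ k) (hn : n = 2 * k + 1)
    (P : PowerSeries ℚ)
    (hP : P * ((1 - X ^ 2) * (1 - X ^ (2 * k))) = 1 - X ^ (2 * k + 2)) :
    Tendsto (fun q : ℕ =>
        (∑ j ∈ Finset.range (q + 1), (-1 : ℝ) ^ j * ((PowerSeries.coeff (R := ℚ) j) P : ℝ)) / q)
      atTop (nhds ((n + 1) / (2 * (n - 1)) : ℝ)) := by
  set Q : ℝ⟦X⟧ := PowerSeries.map (Rat.castHom ℝ) P
  have hQ : Q = multiplesSeries ℝ 2 + multiplesSeries ℝ (2 * k) - 1 := by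
    refine eq_multiplesSeries_add_multiplesSeries_sub_one two_pos (by omega) ?_
    simpa [Q, add_comm 2] using congrArg (PowerSeries.map (Rat.castHom ℝ)) hP
  have hQ_even : rescale (-1) Q = Q := by
    rw [hQ, map_sub, map_add, map_one, rescale_neg_one_multiplesSeries even_two,
      rescale_neg_one_multiplesSeries (even_two_mul k)]
  have hsum (q : ℕ) : ∑ j ∈ range (q + 1), (-1 : ℝ) ^ j * (coeff (R := ℚ) j P : ℝ)
      = (q / 2 : ℕ) + (q / (2 * k) : ℕ) + 1 := by
    calc ∑ j ∈ range (q + 1), (-1 : ℝ) ^ j * (coeff (R := ℚ) j P : ℝ)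
        = ∑ j ∈ range (q + 1), coeff j (rescale (-1) Q) := by simp [Q, coeff_rescale]
      _ = _ := by
        rw [hQ_even, hQ]
        simp only [map_sub, map_add, sum_sub_distrib, sum_add_distrib,
          sum_range_succ_coeff_multiplesSeries]
        simp only [coeff_one, sum_ite_eq', mem_range, Nat.zero_lt_succ, if_true, Nat.cast_add,
          Nat.cast_one]
        ring
  have hlim := ((tendsto_natCast_div_div_atTop 2).add
    (tendsto_natCast_div_div_atTop (2 * k))).add tendsto_one_div_atTop_nhds_zero_nat
  convert hlim using 1
  · funext q
    rw [hsum, add_div, add_div]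
  · subst hn
    congr 1
    push_cast
    field_simp
    ring
end

section
/- Let k ≥ 2 and let θ̂₁,...,θ̂_k be irrational numbers with ∑_{j=1}^k θ̂_j = (1/2)(k + n/(n+1)) for some integer n ≥ 1. Define ind(m) = m·n/(n+1) + k - 2∑_{j=1}^k {m θ̂_j} for m ∈ ℕ, where {x} is the fractional part. Then for all positive integers l, m with |m - 2(n+1)l| > 4(n+1) and k ≤ 2n, one has |ind(m) - 2nl| > 2n. -/
theorem index_separation (n k : ℕ) (hn : 1 ≤ n) (hk2 : 2 ≤ k) (hk : k ≤ 2 * n)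
    (θ : Fin k → ℝ) (hθ : ∀ j, Irrational (θ j))
    (hsum : ∑ j, θ j = (1 / 2) * ((k : ℝ) + (n : ℝ) / (n + 1)))
    (ind : ℕ → ℝ)
    (hind : ∀ m : ℕ, ind m = (m : ℝ) * (n : ℝ) / (n + 1) + (k : ℝ)
      - 2 * ∑ j, Int.fract ((m : ℝ) * θ j)) :
    ∀ l m : ℕ, 0 < l → 0 < m →
      |(m : ℝ) - 2 * (n + 1) * l| > 4 * (n + 1) →
      |ind m - 2 * (n : ℝ) * l| > 2 * n := by
  intro l m hl hm habs
  have hn1 : (0:ℝ) < (n:ℝ) + 1 := by positivity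
  have hnpos : (0:ℝ) < (n:ℝ) := by exact_mod_cast hn
  set S : ℝ := ∑ j, Int.fract ((m : ℝ) * θ j) with hS
  have hS0 : 0 ≤ S := Finset.sum_nonneg fun j _ => Int.fract_nonneg _
  have hSk : S ≤ (k:ℝ) := by
    calc S ≤ ∑ _j : Fin k, (1:ℝ) :=
          Finset.sum_le_sum fun j _ => le_of_lt (Int.fract_lt_one _)
      _ = (k:ℝ) := by simp
  set A : ℝ := (m : ℝ) - 2 * (n + 1) * l with hA
  have hdecomp : ind m - 2 * (n : ℝ) * l = (n:ℝ) / (n + 1) * A + ((k:ℝ) - 2 * S) := by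
    rw [hind m]
    field_simp
    ring
  have h1 : |(n:ℝ) / (n + 1) * A| > 4 * n := by
    rw [abs_mul, abs_of_nonneg (by positivity : (0:ℝ) ≤ (n:ℝ)/(n+1))]
    have : (n:ℝ) / (n + 1) * (4 * (n + 1)) < (n:ℝ) / (n + 1) * |A| :=
      mul_lt_mul_of_pos_left habs (by positivity)
    calc 4 * (n:ℝ) = (n:ℝ) / (n + 1) * (4 * (n + 1)) := by field_simp
      _ < _ := this
  have h2 : |(k:ℝ) - 2 * S| ≤ (k:ℝ) := by
    rw [abs_le]; constructor <;> linarith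
  have hk' : (k:ℝ) ≤ 2 * n := by exact_mod_cast hk
  have htri : |(n:ℝ) / (n + 1) * A| ≤ |ind m - 2 * (n : ℝ) * l| + |(k:ℝ) - 2 * S| := by
    have heq : (n:ℝ) / (n + 1) * A = (ind m - 2 * (n : ℝ) * l) - ((k:ℝ) - 2 * S) := by
      linarith
    rw [heq]; exact abs_sub _ _
  linarith
end

section
/- Let n ≥ 1, k ≥ 2 with k ≤ 2n, and θ̂₁,...,θ̂_k irrational with ∑_{j=1}^k θ̂_j = (1/2)(k + n/(n+1)). For m = 2(n+1)l + 2L + 1 with l ∈ ℕ, L ∈ ℤ, set Q_L = k/2 + (2L+1)n/(2(n+1)) and ind(m) = m·n/(n+1) + k - 2∑_{j=1}^k {m θ̂_j}. Then ind(m) = 2nl + 2[Q_L] - 2i for an integer i with 0 ≤ i ≤ k-1 if and only if ∑_{j=2}^k {m θ̂_j} lies in the interval I_i(L), where I_0(L) = (0, {Q_L}), I_i(L) = (i-1+{Q_L}, i+{Q_L}) for 1 ≤ i ≤ k-2, and I_{k-1}(L) = (k-2+{Q_L}, k-1), assuming ∑_{j=2}^k {m θ̂_j} is irrational and {Q_L}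 ∈ (0,1). -/
/-!
Since `∑ θ̂_j = k/2 + n/(2(n+1))`, the number `m ∑ θ̂_j` differs from `Q_L` by an integer, hence
so does `∑_j {m θ̂_j} = {m θ̂_1} + S`, and `ind(m) = 2nl + 2Q_L - 2 ∑_j {m θ̂_j}`. Thus the index
equals `2nl + 2[Q_L] - 2i` exactly when `{m θ̂_1} + S = i + {Q_L}`. Both sides are congruent
modulo `1` and `{m θ̂_1} ∈ [0, 1)`, so this happens iff `i + {Q_L} - S ∈ [0, 1)`, and the
irrationality of `S` makes the endpoints strict. Intersecting with `0 < S < k - 1` gives the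
intervals `I_i(L)`.
-/

open Set

theorem add_eq_iff_mem_Ioo {K : Type*} [Field K] [LinearOrder K] [IsStrictOrderedRing K]
    [FloorRing K] {a s c : K} (ha : a ∈ Ico 0 1)
    (hz : ∃ z : ℤ, a + s - c = z) (hs : s ≠ c) : a + s = c ↔ s ∈ Ioo (c - 1) c := by
  obtain ⟨ha0, ha1⟩ := ha
  constructor
  · rintro rfl
    exact ⟨by linarith, lt_of_le_of_ne (by linarith) hs⟩
  · rintro ⟨hc1, hc⟩
    obtain ⟨z, hz⟩ := hz
    have : Int.fract a = c - s :=
      Int.fract_eq_iff.mpr ⟨by linarith, by linarith, z, by rw [← hz]; abel⟩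
    rw [Int.fract_eq_self.mpr ⟨ha0, ha1⟩] at this
    rw [this, sub_add_cancel]

theorem Finset.exists_sum_fract_sub_sum_eq_int {R ι : Type*} [Ring R] [LinearOrder R] [FloorRing R]
    (s : Finset ι) (x : ι → R) :
    ∃ z : ℤ, ∑ j ∈ s, Int.fract (x j) - ∑ j ∈ s, x j = z :=
  ⟨-∑ j ∈ s, ⌊x j⌋, by simp only [Int.fract, sum_sub_distrib]; push_cast; abel⟩

theorem Finset.sum_fract_mem_Ioo_of_irrational {ι : Type*} {s : Finset ι} {x : ι → ℝ}
    (h : Irrational (∑ j ∈ s, Int.fract (x j))) :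
    ∑ j ∈ s, Int.fract (x j) ∈ Set.Ioo 0 (s.card : ℝ) := by
  have hs : s.Nonempty := nonempty_of_sum_ne_zero h.ne_zero
  refine ⟨(sum_nonneg fun j _ => Int.fract_nonneg _).lt_of_ne h.ne_zero.symm, ?_⟩
  simpa using sum_lt_sum_of_nonempty hs fun j _ => Int.fract_lt_one (x j)

theorem Irrational.ne_natCast_add_fract_ratCast {x : ℝ} (h : Irrational x) (i : ℕ) (q : ℚ) :
    x ≠ i + Int.fract (q : ℝ) := by
  simpa [← Rat.cast_fract] using h.ne_rat (i + Int.fract q)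

/-- The interval `I_i(L)` of the paper, with `q` standing for `{Q_L}`. -/
def indexInterval (k i : ℕ) (q : ℝ) : Set ℝ :=
  if i = 0 then Ioo 0 q
  else if i ≤ k - 2 then Ioo ((i : ℝ) - 1 + q) ((i : ℝ) + q)
  else Ioo ((k : ℝ) - 2 + q) ((k : ℝ) - 1)

theorem mem_indexInterval_iff {k i : ℕ} {q S : ℝ} (hq : q ∈ Ico 0 1)
    (hS : S ∈ Ioo 0 ((k : ℝ) - 1)) (hi : i ≤ k - 1) :
    S ∈ indexInterval k i q ↔ S ∈ Ioo (i + q - 1) (i + q) := by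
  obtain ⟨hq0, hq1⟩ := hq
  obtain ⟨hS0, hSk⟩ := hS
  unfold indexInterval
  split_ifs with h0 hik
  · subst h0
    simp only [mem_Ioo, Nat.cast_zero]
    constructor <;> rintro ⟨h1, h2⟩ <;> constructor <;> linarith
  · simp only [mem_Ioo]
    constructor <;> rintro ⟨h1, h2⟩ <;> constructor <;> linarith
  · have hik : (i : ℝ) = k - 1 := by
      rw [show i = k - 1 by omega, Nat.cast_pred (by omega)]
    simp only [mem_Ioo, hik]
    constructor <;> rintro ⟨h1, h2⟩ <;> constructor <;> linarith

section Arithmetic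

variable {n k l : ℕ} {L : ℤ} {m Q : ℝ}

theorem mul_half_add_div_succ_sub_eq_intCast (hm : m = 2 * (n + 1) * l + 2 * L + 1)
    (hQ : Q = (k : ℝ) / 2 + (2 * (L : ℝ) + 1) * n / (2 * (n + 1))) :
    m * ((1 / 2) * ((k : ℝ) + (n : ℝ) / (n + 1))) - Q
      = (((n + 1) * l + L) * k + n * l : ℤ) := by
  rw [hm, hQ]
  push_cast
  field_simp
  ring

theorem mul_div_succ_eq (hm : m = 2 * (n + 1) * l + 2 * L + 1)
    (hQ : Q = (k : ℝ) / 2 + (2 * (L : ℝ) + 1) * n / (2 * (n + 1))) :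
    m * n / (n + 1) = 2 * n * l + 2 * Q - k := by
  rw [hm, hQ]
  field_simp
  ring

end Arithmetic

theorem index_interval_criterion (n k : ℕ) (hk2 : 2 ≤ k)
    (θ : Fin k → ℝ)
    (hsum : ∑ j, θ j = (1 / 2) * ((k : ℝ) + (n : ℝ) / (n + 1)))
    (l : ℕ) (L : ℤ) (m : ℤ) (hm : m = 2 * (n + 1) * l + 2 * L + 1)
    (Q S ind : ℝ)
    (hQ : Q = (k : ℝ) / 2 + (2 * (L : ℝ) + 1) * n / (2 * (n + 1)))
    (hS : S = ∑ j ∈ Finset.univ.erase (⟨0, by omega⟩ : Fin k), Int.fract ((m : ℝ) * θ j))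
    (hind : ind = (m : ℝ) * (n : ℝ) / (n + 1) + (k : ℝ)
      - 2 * ∑ j, Int.fract ((m : ℝ) * θ j))
    (hSirr : Irrational S) :
    ∀ i : ℕ, i ≤ k - 1 →
      (ind = 2 * (n : ℝ) * l + 2 * (⌊Q⌋ : ℝ) - 2 * i ↔
        S ∈ (if i = 0 then Set.Ioo (0 : ℝ) (Int.fract Q)
          else if i ≤ k - 2 then Set.Ioo ((i : ℝ) - 1 + Int.fract Q) ((i : ℝ) + Int.fract Q)
          else Set.Ioo ((k : ℝ) - 2 + Int.fract Q) ((k : ℝ) - 1))) := by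
  intro i hi
  set z : Fin k := ⟨0, by omega⟩
  set F := ∑ j, Int.fract ((m : ℝ) * θ j)
  have hmR : (m : ℝ) = 2 * (n + 1) * l + 2 * L + 1 := by exact_mod_cast congrArg Int.cast hm
  have hF : F = Int.fract ((m : ℝ) * θ z) + S := by
    rw [hS, Finset.add_sum_erase _ (fun j => Int.fract ((m : ℝ) * θ j)) (Finset.mem_univ z)]
  have hind' : ind = 2 * n * l + 2 * Q - 2 * F := by rw [hind, mul_div_succ_eq hmR hQ]; ring
  obtain ⟨b, hb⟩ : ∃ b : ℤ, F - Q = b := by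
    obtain ⟨a, ha⟩ := Finset.exists_sum_fract_sub_sum_eq_int Finset.univ fun j => (m : ℝ) * θ j
    refine ⟨a + (((n + 1) * l + L) * k + n * l), ?_⟩
    rw [Int.cast_add, ← ha, ← mul_half_add_div_succ_sub_eq_intCast hmR hQ, ← hsum, Finset.mul_sum]
    ring
  have hSQ : S ≠ i + Int.fract Q := by
    rw [show Q = ((k / 2 + (2 * L + 1) * n / (2 * (n + 1)) : ℚ) : ℝ) by rw [hQ]; push_cast; ring]
    exact hSirr.ne_natCast_add_fract_ratCast i _
  have hSbd : S ∈ Ioo 0 ((k : ℝ) - 1) := by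
    have := Finset.sum_fract_mem_Ioo_of_irrational (hS ▸ hSirr)
    rwa [← hS, Finset.card_erase_of_mem (Finset.mem_univ z), Finset.card_univ, Fintype.card_fin,
      Nat.cast_pred (by omega)] at this
  calc ind = 2 * n * l + 2 * ⌊Q⌋ - 2 * i ↔ Int.fract ((m : ℝ) * θ z) + S = i + Int.fract Q := by
        rw [hind', hF]; constructor <;> intro h <;> linarith [Int.floor_add_fract Q]
    _ ↔ S ∈ Ioo (i + Int.fract Q - 1) (i + Int.fract Q) :=
        add_eq_iff_mem_Ioo ⟨Int.fract_nonneg _, Int.fract_lt_one _⟩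
          ⟨b + ⌊Q⌋ - i, by push_cast; linarith [Int.floor_add_fract Q]⟩ hSQ
    _ ↔ _ := (mem_indexInterval_iff ⟨Int.fract_nonneg Q, Int.fract_lt_one Q⟩ hSbd hi).symm
end

section
/- Let θ ∈ ℝ \ ℚ, k ≥ 2, integers p₁,...,p_k all nonzero with ∑_{j=1}^k p_j = 0, and rationals ξ₁,...,ξ_k ∈ [0,1) with {∑_{j=1}^k ξ_j} ∈ (0,1) \ {1/2}. For η ∈ ℚ define η(ξ_j) = {ξ_j - p_j η}, and set k₀⁺(η) = #{j : η(ξ_j) = 0, p_j > 0}, k₀⁻(η) = #{j : η(ξ_j) = 0, p_j < 0}. Then there exists η ∈ ℚ with |k₀⁺(η) - k₀⁻(η)| ≥ 1. -/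
open Finset

lemma sum_range_cast (q : ℕ) : ∑ n ∈ Finset.range q, (n:ℚ) = q*(q-1)/2 := by
  induction q with
  | zero => simp
  | succ n ih => rw [Finset.sum_range_succ, ih]; push_cast; ring

lemma sumSol (p : ℤ) (hp : p ≠ 0) (ξ : ℚ) (hξ0 : 0 ≤ ξ) (hξ1 : ξ < 1) :
    (if 0 < p then (1:ℚ) else -1) * ∑ n ∈ Finset.range p.natAbs, Int.fract ((ξ + n) / p)
      = ξ + ((p:ℚ) - 1)/2 + (if p < 0 ∧ ξ = 0 then 1 else 0) := by
  have hA0 : (0:ℚ) < (p.natAbs:ℚ) := by exact_mod_cast (by omega : 0 < p.natAbs)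
  have hAne : ((p.natAbs:ℚ)) ≠ 0 := ne_of_gt hA0
  rcases lt_or_gt_of_ne hp with hneg | hpos
  · -- p < 0
    have hpq : (p:ℚ) = -(p.natAbs:ℚ) := by
      push_cast [Nat.cast_natAbs]
      rw [abs_of_neg (by exact_mod_cast hneg : (p:ℚ) < 0)]; ring
    have e1 : (if 0 < p then (1:ℚ) else -1) = -1 := if_neg (by omega)
    by_cases hξz : ξ = 0
    · subst hξz
      have e2 : (if p < 0 ∧ (0:ℚ) = 0 then (1:ℚ) else 0) = 1 := if_pos ⟨hneg, rfl⟩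
      rw [e1, e2]
      obtain ⟨q', hq'⟩ : ∃ q', p.natAbs = q' + 1 := ⟨p.natAbs - 1, by omega⟩
      rw [hq', Finset.sum_range_succ']
      have h0 : Int.fract ((0 + ((0:ℕ):ℚ)) / p) = 0 := by norm_num
      rw [h0, add_zero]
      have hval : ∀ n ∈ Finset.range q', Int.fract ((0 + ((n+1 : ℕ):ℚ)) / p)
          = 1 - ((n:ℚ)+1) / (p.natAbs:ℚ) := by
        intro n hn
        have hn' : (n:ℚ) < q' := by exact_mod_cast Finset.mem_range.mp hn
        have hAq : ((p.natAbs:ℚ)) = (q':ℚ) + 1 := by exact_mod_cast hq'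
        have hx0 : 0 < ((n:ℚ)+1) / (p.natAbs:ℚ) := by positivity
        have hx1 : ((n:ℚ)+1) / (p.natAbs:ℚ) < 1 := by
          rw [div_lt_one hA0, hAq]; linarith
        have harg : (0 + ((n+1 : ℕ):ℚ)) / p = -(((n:ℚ)+1) / (p.natAbs:ℚ)) := by
          rw [hpq]; push_cast; rw [div_neg]; norm_num
        have hfs : Int.fract (((n:ℚ)+1) / (p.natAbs:ℚ)) = ((n:ℚ)+1) / (p.natAbs:ℚ) :=
          Int.fract_eq_self.mpr ⟨le_of_lt hx0, hx1⟩
        rw [harg, Int.fract_neg (by rw [hfs]; exact ne_of_gt hx0), hfs]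
      rw [Finset.sum_congr rfl hval, Finset.sum_sub_distrib, Finset.sum_const,
        Finset.card_range, ← Finset.sum_div, Finset.sum_add_distrib, Finset.sum_const,
        Finset.card_range, sum_range_cast]
      have hAq : ((p.natAbs:ℚ)) = (q':ℚ) + 1 := by exact_mod_cast hq'
      rw [hpq, hAq]
      have : ((q':ℚ) + 1) ≠ 0 := by positivity
      field_simp
      ring
    · have hξpos : 0 < ξ := lt_of_le_of_ne hξ0 (Ne.symm hξz)
      have e2 : (if p < 0 ∧ ξ = 0 then (1:ℚ) else 0) = 0 := if_neg (by tauto)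
      rw [e1, e2]
      have hval : ∀ n ∈ Finset.range p.natAbs, Int.fract ((ξ + (n:ℚ)) / p)
          = 1 - (ξ + (n:ℚ)) / (p.natAbs:ℚ) := by
        intro n hn
        have hn' : (n:ℚ) < (p.natAbs:ℚ) := by exact_mod_cast Finset.mem_range.mp hn
        have hn0 : (0:ℚ) ≤ (n:ℚ) := Nat.cast_nonneg n
        have hx0 : 0 < (ξ + (n:ℚ)) / (p.natAbs:ℚ) := div_pos (by linarith) hA0
        have hx1 : (ξ + (n:ℚ)) / (p.natAbs:ℚ) < 1 := by
          rw [div_lt_one hA0]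
          have : (n:ℚ) + 1 ≤ (p.natAbs:ℚ) := by exact_mod_cast Finset.mem_range.mp hn
          linarith
        have harg : (ξ + (n:ℚ)) / p = -((ξ + (n:ℚ)) / (p.natAbs:ℚ)) := by
          rw [hpq, div_neg]
        have hfs : Int.fract ((ξ + (n:ℚ)) / (p.natAbs:ℚ)) = (ξ + (n:ℚ)) / (p.natAbs:ℚ) :=
          Int.fract_eq_self.mpr ⟨le_of_lt hx0, hx1⟩
        rw [harg, Int.fract_neg (by rw [hfs]; exact ne_of_gt hx0), hfs]
      rw [Finset.sum_congr rfl hval, Finset.sum_sub_distrib, Finset.sum_const,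
        Finset.card_range, ← Finset.sum_div, Finset.sum_add_distrib, Finset.sum_const,
        Finset.card_range, sum_range_cast, hpq]
      field_simp
      ring
  · -- p > 0
    have hqQ : (p.natAbs : ℚ) = (p:ℚ) := by
      push_cast [Nat.cast_natAbs]
      rw [abs_of_pos (by exact_mod_cast hpos : (0:ℚ) < p)]
    have e1 : (if 0 < p then (1:ℚ) else -1) = 1 := if_pos hpos
    have e2 : (if p < 0 ∧ ξ = 0 then (1:ℚ) else 0) = 0 := if_neg (by rintro ⟨h,_⟩; omega)
    rw [e1, e2, one_mul]
    have hval : ∀ n ∈ Finset.range p.natAbs, Int.fract ((ξ + (n:ℚ)) / p)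
        = (ξ + (n:ℚ)) / p := by
      intro n hn
      apply Int.fract_eq_self.mpr
      have hp0 : (0:ℚ) < (p:ℚ) := by exact_mod_cast hpos
      constructor
      · apply div_nonneg (by positivity) hp0.le
      · rw [div_lt_one hp0]
        have : (n:ℚ) + 1 ≤ (p.natAbs:ℚ) := by exact_mod_cast Finset.mem_range.mp hn
        rw [hqQ] at this
        linarith
    rw [Finset.sum_congr rfl hval, ← Finset.sum_div, Finset.sum_add_distrib,
      Finset.sum_const, Finset.card_range, sum_range_cast]
    simp only [nsmul_eq_mul]
    rw [hqQ]
    have : (p:ℚ) ≠ 0 := by exact_mod_cast hp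
    field_simp
    ring

open Finset

lemma fract_cond (p : ℤ) (hp : p ≠ 0) (ξ : ℚ) (n : ℕ) :
    Int.fract (ξ - (p:ℚ) * Int.fract ((ξ + (n:ℚ)) / (p:ℚ))) = 0 := by
  have hpQ : (p:ℚ) ≠ 0 := by exact_mod_cast hp
  have hfr : Int.fract ((ξ + (n:ℚ)) / (p:ℚ)) = (ξ + (n:ℚ)) / (p:ℚ) - ⌊(ξ + (n:ℚ)) / (p:ℚ)⌋ := rfl
  have : ξ - (p:ℚ) * Int.fract ((ξ + (n:ℚ)) / (p:ℚ))
      = ((p * ⌊(ξ + (n:ℚ)) / (p:ℚ)⌋ - n : ℤ) : ℚ) := by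
    rw [hfr]
    push_cast
    field_simp
    ring
  rw [this, Int.fract_intCast]

lemma inj_on_range (p : ℤ) (hp : p ≠ 0) (ξ : ℚ) :
    ∀ n ∈ Finset.range p.natAbs, ∀ n' ∈ Finset.range p.natAbs,
      Int.fract ((ξ + (n:ℚ)) / (p:ℚ)) = Int.fract ((ξ + (n':ℚ)) / (p:ℚ)) → n = n' := by
  intro n hn n' hn' heq
  have hn := Finset.mem_range.mp hn
  have hn' := Finset.mem_range.mp hn'
  obtain ⟨z, hz⟩ := Int.fract_eq_fract.mp heq
  have hpQ : (p:ℚ) ≠ 0 := by exact_mod_cast hp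
  have hQ : ((n:ℚ) - n') = (p:ℚ) * z := by
    field_simp at hz
    linarith [hz]
  have hZ : (n:ℤ) - n' = p * z := by exact_mod_cast hQ
  by_contra hne
  have hzne : z ≠ 0 := by
    rintro rfl; simp at hZ; omega
  have h1 : (1:ℤ) ≤ |z| := Int.one_le_abs hzne
  have h2 : |p * z| = |p| * |z| := abs_mul p z
  have h3 : |p| ≤ |p * z| := by
    rw [h2]; nlinarith [abs_nonneg p, abs_pos.mpr hp]
  have hb : |(n:ℤ) - n'| < (p.natAbs:ℤ) := by
    rw [abs_lt]; omega
  rw [← hZ] at h3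
  rw [Int.abs_eq_natAbs] at h3
  omega

lemma filterEq (T : Finset ℚ) (hT : ∀ η ∈ T, 0 ≤ η ∧ η < 1)
    (p : ℤ) (hp : p ≠ 0) (ξ : ℚ)
    (hsub : ∀ n ∈ Finset.range p.natAbs, Int.fract ((ξ + (n:ℚ))/(p:ℚ)) ∈ T) :
    T.filter (fun η => Int.fract (ξ - (p:ℚ) * η) = 0)
      = (Finset.range p.natAbs).image (fun n : ℕ => Int.fract ((ξ + (n:ℚ))/(p:ℚ))) := by
  have hpQ : (p:ℚ) ≠ 0 := by exact_mod_cast hp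
  ext η
  simp only [Finset.mem_filter, Finset.mem_image, Finset.mem_range]
  constructor
  · rintro ⟨hηT, hcond⟩
    obtain ⟨hη0, hη1⟩ := hT η hηT
    rw [Int.fract_eq_iff] at hcond
    obtain ⟨-, -, m, hm⟩ := hcond
    rw [sub_zero] at hm
    -- η = (ξ - m)/p
    have hη : η = (ξ - m) / p := by field_simp; linarith [hm]
    set A : ℤ := (p.natAbs : ℤ) with hA
    have hApos : 0 < A := by rw [hA]; exact_mod_cast Int.natAbs_pos.mpr hp
    set N : ℤ := (-m) % A with hN
    have hN0 : 0 ≤ N := Int.emod_nonneg _ hApos.ne'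
    have hNA : N < A := Int.emod_lt_of_pos _ hApos
    refine ⟨N.toNat, by omega, ?_⟩
    have hNcast : ((N.toNat : ℕ) : ℚ) = (N : ℚ) := by
      norm_cast; omega
    -- p ∣ N + m
    have hdvd : p ∣ N + m := by
      have h1 : A ∣ N + m := by
        have := Int.emod_add_mul_ediv (-m) A
        refine ⟨-((-m)/A), ?_⟩
        rw [mul_neg]
        omega
      have h2 : p ∣ A := Int.dvd_natAbs.mpr dvd_rfl
      exact h2.trans h1
    obtain ⟨c, hc⟩ := hdvd
    have key : Int.fract ((ξ + (N:ℚ))/(p:ℚ)) = Int.fract ((ξ - m)/(p:ℚ)) := by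
      apply Int.fract_eq_fract.mpr
      refine ⟨c, ?_⟩
      have : ((N:ℚ) + m) = (p:ℚ) * c := by exact_mod_cast hc
      field_simp
      linarith [this]
    rw [hNcast, key, ← hη, Int.fract_eq_self.mpr ⟨hη0, hη1⟩]
  · rintro ⟨n, hn, rfl⟩
    exact ⟨hsub n (Finset.mem_range.mpr hn), fract_cond p hp ξ n⟩
open Finset

theorem effective_difference_number_ge_one (θ : ℝ) (hθ : Irrational θ)
    (k : ℕ) (hk : 2 ≤ k) (p : Fin k → ℤ) (hp : ∀ j, p j ≠ 0)
    (hpsum : ∑ j, p j = 0)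
    (ξ : Fin k → ℚ) (hξ : ∀ j, ξ j ∈ Set.Ico (0 : ℚ) 1)
    (hξsum : Int.fract (∑ j, ξ j) ∈ Set.Ioo (0 : ℚ) 1 \ {1 / 2}) :
    ∃ η : ℚ, 1 ≤
      |((Finset.univ.filter fun j => Int.fract (ξ j - (p j : ℚ) * η) = 0 ∧ 0 < p j).card : ℤ)
        - ((Finset.univ.filter fun j => Int.fract (ξ j - (p j : ℚ) * η) = 0 ∧ p j < 0).card : ℤ)| := by
  by_contra hcon
  push_neg at hcon
  have hEq : ∀ η : ℚ,
      ((Finset.univ.filter fun j => Int.fract (ξ j - (p j : ℚ) * η) = 0 ∧ 0 < p j).card : ℤ)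
        = ((Finset.univ.filter fun j => Int.fract (ξ j - (p j : ℚ) * η) = 0 ∧ p j < 0).card : ℤ) := by
    intro η
    have h := hcon η
    rw [abs_lt] at h
    omega
  -- setup
  set f : Fin k → ℕ → ℚ := fun j n => Int.fract ((ξ j + (n:ℚ)) / ((p j : ℤ) : ℚ)) with hf
  set T : Finset ℚ := Finset.univ.biUnion (fun j => (Finset.range (p j).natAbs).image (f j)) with hTdef
  have hT : ∀ η ∈ T, 0 ≤ η ∧ η < 1 := by
    intro η hη
    rw [hTdef, Finset.mem_biUnion] at hη
    obtain ⟨j, -, hη⟩ := hη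
    rw [Finset.mem_image] at hη
    obtain ⟨n, -, rfl⟩ := hη
    exact ⟨Int.fract_nonneg _, Int.fract_lt_one _⟩
  have hfilter : ∀ j, T.filter (fun η => Int.fract (ξ j - (p j : ℚ) * η) = 0)
      = (Finset.range (p j).natAbs).image (f j) := by
    intro j
    apply filterEq T hT (p j) (hp j) (ξ j)
    intro n hn
    rw [hTdef, Finset.mem_biUnion]
    exact ⟨j, Finset.mem_univ j, Finset.mem_image_of_mem _ hn⟩
  set s : Fin k → ℚ := fun j => if 0 < p j then (1:ℚ) else -1 with hs
  -- F = 0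
  have hF0 : ∑ η ∈ T, η * (((Finset.univ.filter fun j => Int.fract (ξ j - (p j : ℚ) * η) = 0 ∧ 0 < p j).card : ℚ)
        - ((Finset.univ.filter fun j => Int.fract (ξ j - (p j : ℚ) * η) = 0 ∧ p j < 0).card : ℚ)) = 0 := by
    apply Finset.sum_eq_zero
    intro η _
    have := hEq η
    have h2 : ((Finset.univ.filter fun j => Int.fract (ξ j - (p j : ℚ) * η) = 0 ∧ 0 < p j).card : ℚ)
        = ((Finset.univ.filter fun j => Int.fract (ξ j - (p j : ℚ) * η) = 0 ∧ p j < 0).card : ℚ) := by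
      exact_mod_cast this
    rw [h2]; ring
  -- card difference as sum
  have hsplit : ∀ η : ℚ, (((Finset.univ.filter fun j => Int.fract (ξ j - (p j : ℚ) * η) = 0 ∧ 0 < p j).card : ℚ)
        - ((Finset.univ.filter fun j => Int.fract (ξ j - (p j : ℚ) * η) = 0 ∧ p j < 0).card : ℚ))
      = ∑ j, (if Int.fract (ξ j - (p j : ℚ) * η) = 0 then s j else 0) := by
    intro η
    rw [Finset.card_filter, Finset.card_filter]
    push_cast
    rw [← Finset.sum_sub_distrib]
    apply Finset.sum_congr rfl
    intro j _
    have hpj := hp j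
    by_cases hc : Int.fract (ξ j - (p j : ℚ) * η) = 0
    · rcases lt_or_gt_of_ne hpj with hneg | hpos
      · simp [hs, hc, hneg, not_lt_of_gt hneg]
      · simp [hs, hc, hpos, not_lt_of_gt hpos]
    · simp [hc]
  -- swap sums
  have hswap : ∑ η ∈ T, η * (∑ j, (if Int.fract (ξ j - (p j : ℚ) * η) = 0 then s j else 0))
      = ∑ j, s j * (∑ n ∈ Finset.range (p j).natAbs, f j n) := by
    rw [Finset.sum_congr rfl (fun η _ => Finset.mul_sum ..)]
    rw [Finset.sum_comm]
    apply Finset.sum_congr rfl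
    intro j _
    have step1 : ∀ η ∈ T, η * (if Int.fract (ξ j - (p j : ℚ) * η) = 0 then s j else 0)
        = (if Int.fract (ξ j - (p j : ℚ) * η) = 0 then η * s j else 0) := by
      intro η _
      by_cases hc : Int.fract (ξ j - (p j : ℚ) * η) = 0 <;> simp [hc]
    rw [Finset.sum_congr rfl step1, ← Finset.sum_filter, hfilter j,
      Finset.sum_image (inj_on_range (p j) (hp j) (ξ j)), ← Finset.sum_mul]
    ring
  -- evaluate
  have heval : ∑ j, s j * (∑ n ∈ Finset.range (p j).natAbs, f j n)
      = ∑ j, (ξ j + (((p j : ℤ) : ℚ) - 1)/2 + (if p j < 0 ∧ ξ j = 0 then (1:ℚ) else 0)) := by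
    apply Finset.sum_congr rfl
    intro j _
    exact sumSol (p j) (hp j) (ξ j) (hξ j).1 (hξ j).2
  have hzero : ∑ j, (ξ j + (((p j : ℤ) : ℚ) - 1)/2 + (if p j < 0 ∧ ξ j = 0 then (1:ℚ) else 0)) = 0 := by
    rw [← heval, ← hswap]
    have hcg : ∑ η ∈ T, η * (∑ j, (if Int.fract (ξ j - (p j : ℚ) * η) = 0 then s j else 0))
        = ∑ η ∈ T, η * (((Finset.univ.filter fun j => Int.fract (ξ j - (p j : ℚ) * η) = 0 ∧ 0 < p j).card : ℚ)
        - ((Finset.univ.filter fun j => Int.fract (ξ j - (p j : ℚ) * η) = 0 ∧ p j < 0).card : ℚ)) :=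
      Finset.sum_congr rfl (fun η _ => by rw [hsplit η])
    rw [hcg]
    exact hF0
  -- extract: 2 * ∑ ξ = k - 2 * c
  set c : ℕ := (Finset.univ.filter fun j => p j < 0 ∧ ξ j = 0).card with hc
  have hE : ∑ j, (if p j < 0 ∧ ξ j = 0 then (1:ℚ) else 0) = (c : ℚ) := by
    rw [hc, Finset.card_filter]
    push_cast
    apply Finset.sum_congr rfl
    intro j _
    split <;> simp
  have hpsumQ : ∑ j, ((p j : ℤ) : ℚ) = 0 := by exact_mod_cast congrArg (fun z : ℤ => (z:ℚ)) hpsum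
  rw [Finset.sum_add_distrib, Finset.sum_add_distrib, hE] at hzero
  have hmid : ∑ j, (((p j : ℤ) : ℚ) - 1)/2 = -(k:ℚ)/2 := by
    rw [← Finset.sum_div]
    rw [Finset.sum_sub_distrib, hpsumQ, Finset.sum_const, Finset.card_univ, Fintype.card_fin]
    simp
  rw [hmid] at hzero
  have hx : 2 * (∑ j, ξ j) = (((k : ℤ) - 2 * c : ℤ) : ℚ) := by push_cast; linarith
  -- final contradiction via fract
  set x : ℚ := ∑ j, ξ j with hxdef
  set m : ℤ := (k : ℤ) - 2 * c with hm
  set t : ℤ := m - 2 * ⌊x⌋ with ht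
  have htQ : (t : ℚ) = 2 * Int.fract x := by
    rw [ht, Int.fract]
    push_cast
    linarith [hx]
  obtain ⟨⟨hfr0, hfr1⟩, hfrhalf⟩ := hξsum
  have h0t : (0:ℚ) < (t:ℚ) := by rw [htQ]; linarith
  have h2t : (t:ℚ) < 2 := by rw [htQ]; have := Int.fract_lt_one x; linarith
  have h0t' : 0 < t := by exact_mod_cast h0t
  have h2t' : t < 2 := by exact_mod_cast h2t
  have : t = 1 := by omega
  rw [this] at htQ
  have : Int.fract x = 1/2 := by
    have : (1:ℚ) = 2 * Int.fract x := by exact_mod_cast htQ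
    linarith
  exact hfrhalf this
end

section
/- Consider the system with (p₁,p₂,p₃) = (-1,-1,2) and (ξ₁,ξ₂,ξ₃) = (1/2,0,0). For every η ∈ ℚ, with k₀⁺(η) = #{j : {ξ_j - p_j η} = 0, p_j > 0} and k₀⁻(η) = #{j : {ξ_j - p_j η} = 0, p_j < 0}, one has k₀⁺(η) = k₀⁻(η); i.e., |k₀⁺(η) - k₀⁻(η)| = 0 for all rational η. -/
/-!
The only index with `p_j > 0` contributes exactly when `2η ∈ ℤ`, the two indices with `p_j < 0`
when `η + 1/2 ∈ ℤ` and when `η ∈ ℤ`. A rational `η` with `2η ∈ ℤ` is an integer or a half-odd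
integer, never both, so both counts equal `1` if `2η ∈ ℤ` and `0` otherwise.
-/

namespace Int

variable {R : Type*} [Field R] [LinearOrder R] [IsStrictOrderedRing R] [FloorRing R]

theorem fract_two_mul_eq_zero_iff {x : R} :
    fract (2 * x) = 0 ↔ fract x = 0 ∨ fract (1 / 2 + x) = 0 := by
  simp only [fract_eq_zero_iff, Set.mem_range]
  constructor
  · rintro ⟨z, hz⟩
    rcases z.even_or_odd' with ⟨m, rfl | rfl⟩
    · exact .inl ⟨m, by push_cast at hz; linarith⟩
    · exact .inr ⟨m + 1, by push_cast at hz ⊢; linarith⟩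
  · rintro (⟨m, hm⟩ | ⟨m, hm⟩)
    · exact ⟨2 * m, by push_cast; linarith⟩
    · exact ⟨2 * m - 1, by push_cast; linarith⟩

theorem not_fract_eq_zero_and_fract_half_add_eq_zero (x : R) :
    ¬(fract x = 0 ∧ fract (1 / 2 + x) = 0) := by
  simp only [fract_eq_zero_iff, Set.mem_range]
  rintro ⟨⟨a, ha⟩, ⟨b, hb⟩⟩
  have h : ((2 * (b - a) : ℤ) : R) = (1 : ℤ) := by push_cast; linarith
  have := cast_injective h
  omega

end Int

theorem counterexample_difference_number_zero
    (p : Fin 3 → ℤ) (hp : p = ![-1, -1, 2])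
    (ξ : Fin 3 → ℚ) (hξ : ξ = ![1 / 2, 0, 0]) :
    ∀ η : ℚ,
      ((Finset.univ.filter fun j => Int.fract (ξ j - (p j : ℚ) * η) = 0 ∧ 0 < p j).card : ℤ)
        = ((Finset.univ.filter fun j => Int.fract (ξ j - (p j : ℚ) * η) = 0 ∧ p j < 0).card : ℤ) := by
  subst hp hξ
  intro η
  simp only [Finset.card_filter, Fin.sum_univ_three]
  norm_num [Matrix.cons_val_two, Int.fract_neg_eq_zero, Int.fract_two_mul_eq_zero_iff]
  have := Int.not_fract_eq_zero_and_fract_half_add_eq_zero η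
  split_ifs <;> tauto
end
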